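/- arXiv:2009.08353 — 3 statements merged into one kernel-verified Lean document; each statement's English description precedes it below -/
import Mathlib

section
/- If H is a bipartite graph containing an induced cycle x₀, x₁, …, x_{k−1}, x₀ with k ≥ 10 vertices, then H contains a special edge asteroid of order 3: namely ({x₀, x₄, x₆}, {x₁, x₃, x₇}) with paths P₀₁ = x₀x₁x₂x₃x₄, P₁₂ = x₄x₅x₆, and P₂₀ = x₆x₇…x_{k−1}x₀ witnessing the asteroid conditions. -/
/-- If a bipartite graph `H` contains an induced cycle `x₀,…,x_{k−1},x₀` with `k ≥ 10`
vertices, then `H` contains a special edge asteroid of order 3, namely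
`({x₀, x₄, x₆}, {x₁, x₃, x₇})` with paths `P₀₁ = x₀x₁x₂x₃x₄`, `P₁₂ = x₄x₅x₆` and
`P₂₀ = x₆x₇…x_{k−1}x₀` witnessing the asteroid conditions. -/
theorem stmt_7 {V : Type*} (H : SimpleGraph V)
    (hbip : ∃ col : V → Bool, ∀ u v : V, H.Adj u v → col u ≠ col v)
    (k : ℕ) (hk : 10 ≤ k) (x : ℕ → V)
    (hinj : ∀ i j, i < k → j < k → x i = x j → i = j)
    (hcyc : ∀ i, i + 1 < k → H.Adj (x i) (x (i + 1)))
    (hcyc0 : H.Adj (x (k - 1)) (x 0))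
    (hind : ∀ i j, i < k → j < k → H.Adj (x i) (x j) →
      (j = i + 1 ∨ i = j + 1 ∨ (i = 0 ∧ j = k - 1) ∨ (j = 0 ∧ i = k - 1))) :
    let u : Fin 3 → V := ![x 0, x 4, x 6]
    let v : Fin 3 → V := ![x 1, x 3, x 7]
    let P : Fin 3 → Set V := ![{x 0, x 1, x 2, x 3, x 4}, {x 4, x 5, x 6},
      {w | w = x 0 ∨ ∃ i, 6 ≤ i ∧ i < k ∧ w = x i}]
    -- the matching edges u_i v_i
    (∀ i : Fin 3, H.Adj (u i) (v i)) ∧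
    -- the paths connect u_i to u_{i+1} along the cycle
    (∀ i, i + 1 ≤ 4 → H.Adj (x i) (x (i + 1))) ∧
    (∀ i, 4 ≤ i → i + 1 ≤ 6 → H.Adj (x i) (x (i + 1))) ∧
    (∀ i, 6 ≤ i → i + 1 < k → H.Adj (x i) (x (i + 1))) ∧ H.Adj (x (k - 1)) (x 0) ∧
    -- asteroid condition (a) (for order 3 it subsumes condition (b) as the case i = 0):
    -- no edges between {u_i, v_i} and {v_{i+1}, v_{i+2}} ∪ V(P_{i+1,i+2})
    (∀ i : Fin 3, ∀ w₁ ∈ ({u i, v i} : Set V),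
      ∀ w₂ ∈ ({v (i + 1), v (i + 2)} : Set V) ∪ P (i + 1), ¬ H.Adj w₁ w₂) := by
  intro u v P
  have key : ∀ a b, a < k → b < k → H.Adj (x a) (x b) →
      b = a + 1 ∨ a = b + 1 ∨ (a = 0 ∧ b = k - 1) ∨ (b = 0 ∧ a = k - 1) := hind
  refine ⟨?_, ?_, ?_, ?_, hcyc0, ?_⟩
  · intro i
    fin_cases i
    · exact hcyc 0 (by omega)
    · exact (hcyc 3 (by omega)).symm
    · exact hcyc 6 (by omega)
  · exact fun i hi => hcyc i (by omega)
  · exact fun i _ hi => hcyc i (by omega)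
  · exact fun i _ hi => hcyc i hi
  · intro i w₁ hw₁ w₂ hw₂ hadj
    fin_cases i <;>
      simp only [u, v, P, Fin.isValue, Set.mem_insert_iff, Set.mem_singleton_iff,
        Set.mem_union, Set.mem_setOf_eq, Matrix.cons_val_zero, Matrix.cons_val_one,
        Matrix.head_cons, Fin.reduceAdd, Matrix.cons_val_two, Matrix.tail_cons,
        show ((0 : Fin 3) + 1) = 1 from rfl, show ((0 : Fin 3) + 2) = 2 from rfl,
        show ((1 : Fin 3) + 1) = 2 from rfl, show ((1 : Fin 3) + 2) = 0 from rfl,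
        show ((2 : Fin 3) + 1) = 0 from rfl, show ((2 : Fin 3) + 2) = 1 from rfl,
        show ((⟨0, by omega⟩ : Fin 3)) = 0 from rfl, show ((⟨1, by omega⟩ : Fin 3)) = 1 from rfl,
        show ((⟨2, by omega⟩ : Fin 3)) = 2 from rfl] at hw₁ hw₂ hadj <;>
      rcases hw₁ with rfl | rfl <;>
      rcases hw₂ with (rfl | rfl) | hw₂ <;>
      first
        | (obtain (rfl | rfl | rfl | rfl | rfl) := hw₂
           <;> · have := key _ _ (by omega) (by omega) hadj; omega)
        | (obtain (rfl | ⟨j, hj1, hj2, rfl⟩) := hw₂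
           <;> · have := key _ _ (by omega) (by omega) hadj; omega)
        | (have := key _ _ (by omega) (by omega) hadj; omega)
end

section
/- Let T be the triangle (complete graph K₃ on colors {1,2,3}) and let G' be the graph consisting of a path x₁, y₁, z₁, x₂, y₂, z₂, …, x_k, y_k, z_k together with vertices γ₁,…,γ_k and edges γ_i y_i, with lists: L(x₁) = {2}, L(x_i) = {1,2} for i ≥ 2, L(y_i) = {1,2,3}, L(z_i) = {1,3} for i ≤ k−1, L(z_k) = {3}, L(γ_i) = {1,2,3}. Then a mapping f : {γ₁,…,γ_k} → {1,2,3} extends to a proper list coloring of G' (i.e., a list homomorphism to K₃) if and only if f(γ_i) ≠ 1 for some i ∈ [k]. -/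
private lemma f3a : ∀ a : Fin 3, a ≠ 0 → a ≠ 1 → a = 2 := by decide
private lemma f3b : ∀ a : Fin 3, (a = 0 ∨ a = 2) → a ≠ 2 → a = 0 := by decide
private lemma f3c : ∀ a : Fin 3, (a = 0 ∨ a = 1) → a ≠ 0 → a = 1 := by decide

/-- The blocking gadget for the triangle `K₃` (colors `1 = 0`, `2 = 1`, `3 = 2` in
`Fin 3`): the graph consists of a path `x₁,y₁,z₁,…,x_k,y_k,z_k` plus vertices
`γ₁,…,γ_k` with edges `γᵢyᵢ`; lists are `L(x₁)={2}`, `L(xᵢ)={1,2}` for `i ≥ 2`,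
`L(yᵢ)={1,2,3}`, `L(zᵢ)={1,3}` for `i ≤ k−1`, `L(z_k)={3}`, `L(γᵢ)={1,2,3}`.
A mapping `f` on the `γ`-vertices extends to a proper list coloring iff some
`f(γᵢ) ≠ 1`. A vertex `(i, r) : Fin k × Fin 4` is `x_{i+1}, y_{i+1}, z_{i+1}, γ_{i+1}`
for `r = 0, 1, 2, 3` respectively. -/
theorem stmt_13 (k : ℕ) (hk : 2 ≤ k) (f : Fin k → Fin 3) :
    (∃ g : Fin k × Fin 4 → Fin 3,
      -- g extends f on the γ-vertices
      (∀ i : Fin k, g (i, 3) = f i) ∧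
      -- lists
      g (⟨0, by omega⟩, 0) = 1 ∧
      (∀ i : Fin k, 1 ≤ i.val → (g (i, 0) = 0 ∨ g (i, 0) = 1)) ∧
      (∀ i : Fin k, i.val + 1 < k → (g (i, 2) = 0 ∨ g (i, 2) = 2)) ∧
      g (⟨k - 1, by omega⟩, 2) = 2 ∧
      -- proper coloring along the edges
      (∀ i : Fin k, g (i, 0) ≠ g (i, 1)) ∧
      (∀ i : Fin k, g (i, 1) ≠ g (i, 2)) ∧
      (∀ (i : ℕ) (h1 : i + 1 < k), g (⟨i, by omega⟩, 2) ≠ g (⟨i + 1, h1⟩, 0)) ∧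
      (∀ i : Fin k, g (i, 3) ≠ g (i, 1))) ↔
    ∃ i : Fin k, f i ≠ 0 := by
  constructor
  · rintro ⟨g, hf, hx0, hx, hz, hzk, he1, he2, he3, he4⟩
    by_contra hc
    push_neg at hc
    have hy2 : ∀ i : Fin k, g (i, 0) = 1 → g (i, 1) = 2 := by
      intro i hxi
      have h1 := he1 i
      have h2 := he4 i
      rw [hf i, hc i] at h2
      rw [hxi] at h1
      exact f3a _ (fun h => h2 h.symm) (fun h => h1 h.symm)
    have key : ∀ i (h : i < k), g (⟨i, h⟩, 0) = 1 := by
      intro i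
      induction i with
      | zero => intro h; exact hx0
      | succ n ih =>
        intro h
        have hn : n < k := by omega
        have hy : g (⟨n, hn⟩, 1) = 2 := hy2 _ (ih hn)
        have hzn : g (⟨n, hn⟩, 2) = 0 := by
          have h2 := he2 ⟨n, hn⟩
          rw [hy] at h2
          exact f3b _ (hz ⟨n, hn⟩ (by simpa using h)) (fun hh => h2 hh.symm)
        have h3 := he3 n (by omega)
        rw [hzn] at h3
        exact f3c _ (hx ⟨n+1, h⟩ (by simp)) (fun hh => h3 hh.symm)
    have hm : k - 1 < k := by omega
    have hy' : g (⟨k - 1, hm⟩, 1) = 2 := hy2 _ (key _ hm)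
    have h2 := he2 ⟨k - 1, hm⟩
    rw [hy', hzk] at h2
    exact h2 rfl
  · rintro ⟨j, hj⟩
    set F : ℕ → Fin 3 := fun n => if h : n < k then f ⟨n, h⟩ else 0 with hF
    have hex : ∃ n, F n ≠ 0 := ⟨j.val, by simp [hF, j.isLt, hj]⟩
    set i₀ := Nat.find hex with hi₀
    have hFi₀ : F i₀ ≠ 0 := Nat.find_spec hex
    have hi₀k : i₀ < k := by by_contra hh; apply hFi₀; simp [hF]; omega
    have hfi₀ : f ⟨i₀, hi₀k⟩ ≠ 0 := by simpa [hF, hi₀k] using hFi₀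
    have hbefore : ∀ n (h : n < k), n < i₀ → f ⟨n, h⟩ = 0 := by
      intro n h hn
      have := Nat.find_min hex hn
      simpa [hF, h] using this
    have v0 : ((0 : Fin 4)).val = 0 := rfl
    have v1 : ((1 : Fin 4)).val = 1 := rfl
    have v2 : ((2 : Fin 4)).val = 2 := rfl
    have v3 : ((3 : Fin 4)).val = 3 := rfl
    refine ⟨fun p =>
      if p.2.val = 3 then f p.1
      else if p.1.val < i₀ then (if p.2.val = 0 then 1 else if p.2.val = 1 then 2 else 0)
      else if f p.1 = 0 then (if p.2.val = 0 then 0 else if p.2.val = 1 then 1 else 2)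
      else (if p.2.val = 0 then 1 else if p.2.val = 1 then 0 else 2),
      ?_, ?_, ?_, ?_, ?_, ?_, ?_, ?_, ?_⟩
    · intro i
      simp [v3]
    · simp only [v0, Fin.val_mk, Nat.reduceEqDiff, reduceIte]
      rcases Nat.eq_zero_or_pos i₀ with h0 | h0
      · rw [if_neg (by omega : ¬ (0 : ℕ) < i₀)]
        have hne : f ⟨0, by omega⟩ ≠ 0 := by
          have := hfi₀
          simp only [h0] at this
          exact this
        rw [if_neg hne]
      · rw [if_pos h0]
    · intro i hi
      simp only [v0, Nat.reduceEqDiff, reduceIte]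
      split
      · right; rfl
      · split
        · left; rfl
        · right; rfl
    · intro i hi
      simp only [v2, Nat.reduceEqDiff, reduceIte]
      split
      · left; rfl
      · split
        · right; rfl
        · right; rfl
    · simp only [v2, Fin.val_mk, Nat.reduceEqDiff, reduceIte]
      rw [if_neg (by omega : ¬ k - 1 < i₀)]
      split <;> rfl
    · intro i
      simp only [v0, v1, Nat.reduceEqDiff, reduceIte]
      split
      · decide
      · split <;> decide
    · intro i
      simp only [v1, v2, Nat.reduceEqDiff, reduceIte]
      split
      · decide
      · split <;> decide
    · intro i h1
      simp only [v0, v2, Fin.val_mk, Nat.reduceEqDiff, reduceIte]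
      by_cases hcase : i < i₀
      · rw [if_pos hcase]
        by_cases hcase2 : i + 1 < i₀
        · rw [if_pos hcase2]; decide
        · rw [if_neg hcase2]
          have he : i + 1 = i₀ := by omega
          have hne : f ⟨i + 1, h1⟩ ≠ 0 := by
            have heq : (⟨i + 1, h1⟩ : Fin k) = ⟨i₀, hi₀k⟩ := Fin.ext he
            rw [heq]
            exact hfi₀
          rw [if_neg hne]; decide
      · rw [if_neg hcase, if_neg (by omega : ¬ i + 1 < i₀)]
        rcases eq_or_ne (f ⟨i, by omega⟩) 0 with h | h
        · rw [if_pos h]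
          rcases eq_or_ne (f ⟨i + 1, h1⟩) 0 with h' | h'
          · rw [if_pos h']; decide
          · rw [if_neg h']; decide
        · rw [if_neg h]
          rcases eq_or_ne (f ⟨i + 1, h1⟩) 0 with h' | h'
          · rw [if_pos h']; decide
          · rw [if_neg h']; decide
    · intro i
      simp only [v1, v3, Nat.reduceEqDiff, reduceIte]
      by_cases hcase : i.val < i₀
      · rw [if_pos hcase]
        have := hbefore i.val i.isLt hcase
        rw [show (⟨i.val, i.isLt⟩ : Fin k) = i from rfl] at this
        rw [this]
        decide
      · rw [if_neg hcase]
        rcases eq_or_ne (f i) 0 with h | h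
        · rw [if_pos h, h]; decide
        · rw [if_neg h]; exact h
end

section
/- In the graph G constructed in the cross-composition (Lemma 3.1), if a coloring h : V(G) → {a,b,c,d} satisfies all annotation constraints, then there exist indices i*, j* such that h(ŷ_{j*}) = a, h(y_{j*}) = c, h(ẑ_{i*}) = a, and h(z_{i*}) = c; consequently for each m ∈ [k] there exists ℓ ∈ [n] with h(p^{j*}_{ℓ,m}) = a. -/
/-- In the cross-composition graph of Lemma 3.1: if a coloring `h` with values in
`V(P₄) = {a, b, c, d}` (encoded `a = 0`, `b = 1`, `c = 2`, `d = 3` in `Fin 4`)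
satisfies the annotation constraints — vertices `y_j, ŷ_j, z_i, ẑ_i, p^j_{ℓ,m}` have
list `{a, c}`; the sets `Ŷ`, `Ẑ` and `{y_j} ∪ {p^j_{ℓ,m} : ℓ}` each contain a vertex
not colored `c`; the pairs `{y_j, ŷ_j}` and `{z_i, ẑ_i}` get distinct colors — then
there are `i*, j*` with `h(ŷ_{j*}) = a`, `h(y_{j*}) = c`, `h(ẑ_{i*}) = a`,
`h(z_{i*}) = c`, and for each `m` some `ℓ` with `h(p^{j*}_{ℓ,m}) = a`. -/
theorem stmt_18 (t' n k : ℕ)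
    (y yh z zh : Fin t' → Fin 4) (p : Fin t' → Fin n → Fin k → Fin 4)
    (hly : ∀ j, y j = 0 ∨ y j = 2) (hlyh : ∀ j, yh j = 0 ∨ yh j = 2)
    (hlz : ∀ i, z i = 0 ∨ z i = 2) (hlzh : ∀ i, zh i = 0 ∨ zh i = 2)
    (hlp : ∀ j ℓ m, p j ℓ m = 0 ∨ p j ℓ m = 2)
    (hSY : ∃ j, yh j ≠ 2) (hSZ : ∃ i, zh i ≠ 2)
    (hSP : ∀ j m, y j ≠ 2 ∨ ∃ ℓ, p j ℓ m ≠ 2)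
    (hFy : ∀ j, y j ≠ yh j) (hFz : ∀ i, z i ≠ zh i) :
    ∃ j' i' : Fin t', yh j' = 0 ∧ y j' = 2 ∧ zh i' = 0 ∧ z i' = 2 ∧
      ∀ m : Fin k, ∃ ℓ : Fin n, p j' ℓ m = 0 := by
  obtain ⟨j, hj⟩ := hSY
  obtain ⟨i, hi⟩ := hSZ
  have hyh0 : yh j = 0 := (hlyh j).resolve_right hj
  have hy2 : y j = 2 := (hly j).resolve_left (by rw [← hyh0]; exact hFy j)
  have hzh0 : zh i = 0 := (hlzh i).resolve_right hi
  have hz2 : z i = 2 := (hlz i).resolve_left (by rw [← hzh0]; exact hFz i)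
  refine ⟨j, i, hyh0, hy2, hzh0, hz2, fun m => ?_⟩
  obtain ⟨ℓ, hℓ⟩ := (hSP j m).resolve_left (by simp [hy2])
  exact ⟨ℓ, (hlp j ℓ m).resolve_right hℓ⟩
end
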